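/- arXiv:1803.02220 — 2 statements merged into one kernel-verified Lean document; each statement's English description precedes it below -/
import Mathlib

section
/- Let f∈C([-1,1]) and λ>0. Define the dilated Gegenbauer coefficient \hat{f^a}(l) = c(l,λ) ∫_{-1}^1 f(t) C_l^λ(φ_a(t)) (1-t^2)^{λ-1/2} dt, where φ_a(t) = ((1-a^2)+(a^2+1)t)/((1-a^2)t+(a^2+1)). Then for every l∈ℕ, lim_{a→0^+} \hat{f^a}(l) = binom(2λ+l-1,l) · (c(l,λ)/c(0,λ)) · \hat f(0), where \hat f(0)=c(0,λ)∫_{-1}^1 f(t)(1-t^2)^{λ-1/2}dt. In particular, if \hat f(0)=1 then lim_{a→0^+} \hat{f^a}(l) = (λ+l)/λ. -/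
open Filter Topology intervalIntegral
open Finset Set MeasureTheory

/-- Gegenbauer polynomial `C_l^λ(t)`, defined by its explicit sum formula. -/
noncomputable def gegenbauer (lam : ℝ) (l : ℕ) (t : ℝ) : ℝ :=
  ∑ j ∈ Finset.range (l / 2 + 1),
    (-1 : ℝ) ^ j * Real.Gamma (lam + l - j) /
      (j.factorial * (l - 2 * j).factorial * Real.Gamma lam) * (2 * t) ^ (l - 2 * j)

/-- The Gegenbauer expansion normalization constant
`c(l,λ) = 2^{2λ-1} Γ(λ)² (λ+l) Γ(l+1) / (π Γ(2λ+l))`. -/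
noncomputable def cConst (lam : ℝ) (l : ℕ) : ℝ :=
  Real.rpow 2 (2 * lam - 1) * Real.Gamma lam ^ 2 * (lam + l) * Real.Gamma (l + 1) /
    (Real.pi * Real.Gamma (2 * lam + l))

/-- The Möbius-type map `φ_a(t) = ((1-a²)+(a²+1)t)/((1-a²)t+(a²+1))`. -/
noncomputable def phiDil (a t : ℝ) : ℝ :=
  ((1 - a ^ 2) + (a ^ 2 + 1) * t) / ((1 - a ^ 2) * t + (a ^ 2 + 1))

/-- The Gegenbauer coefficient of the stereographically dilated function:
`\hat{f^a}(l) = c(l,λ) ∫_{-1}^1 f(t) C_l^λ(φ_a(t)) (1-t²)^{λ-1/2} dt`. -/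
noncomputable def hatDil (lam : ℝ) (f : ℝ → ℝ) (a : ℝ) (l : ℕ) : ℝ :=
  cConst lam l * ∫ t in (-1 : ℝ)..1,
    f t * gegenbauer lam l (phiDil a t) * Real.rpow (1 - t ^ 2) (lam - 1 / 2)

noncomputable def pch (lam : ℝ) (n : ℕ) : ℝ := (ascPochhammer ℝ n).eval lam

lemma pch_zero (lam : ℝ) : pch lam 0 = 1 := by simp [pch]
lemma pch_succ (lam : ℝ) (n : ℕ) : pch lam (n+1) = pch lam n * (lam + n) :=
  ascPochhammer_succ_eval n lam

lemma gamma_pch {lam : ℝ} (hlam : 0 < lam) (n : ℕ) :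
    Real.Gamma (lam + n) = pch lam n * Real.Gamma lam := by
  induction n with
  | zero => simp [pch_zero]
  | succ n ih =>
      have h : lam + (n+1 : ℕ) = (lam + n) + 1 := by push_cast; ring
      rw [h, Real.Gamma_add_one (by positivity), ih, pch_succ]; ring

noncomputable def Tt (lam : ℝ) (l j : ℕ) : ℝ :=
  if 2*j ≤ l then
    (-1:ℝ)^j * 2^(l-2*j) * pch lam (l-j) / (j.factorial * (l-2*j).factorial) else 0

noncomputable def Asum (lam : ℝ) (l : ℕ) : ℝ := ∑ j ∈ range (l/2+1), Tt lam l j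

lemma Asum_eq (lam : ℝ) (l m : ℕ) (h : l/2+1 ≤ m) :
    Asum lam l = ∑ j ∈ range m, Tt lam l j := by
  unfold Asum
  refine Finset.sum_subset (Finset.range_subset_range.2 h) ?_
  intro j _ hj
  rw [Finset.mem_range, not_lt] at hj
  exact if_neg (by omega)

lemma Tt_pos (lam : ℝ) {l j : ℕ} (h : 2*j ≤ l) :
    Tt lam l j = (-1:ℝ)^j * 2^(l-2*j) * pch lam (l-j) / (j.factorial * (l-2*j).factorial) :=
  if_pos h

lemma term_rec (lam : ℝ) (n j : ℕ) :
    (n+2 : ℝ) * Tt lam (n+2) j =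
      2*(lam+n+1) * Tt lam (n+1) j - (if j = 0 then 0 else (2*lam+n) * Tt lam n (j-1)) := by
  match j with
  | 0 =>
      rw [if_pos rfl, Tt_pos lam (by omega : 2*0 ≤ n+2), Tt_pos lam (by omega : 2*0 ≤ n+1)]
      simp only [Nat.mul_zero, Nat.sub_zero]
      rw [show n+2 = (n+1)+1 from rfl, pch_succ]
      have hf : ((n+2).factorial : ℝ) = (n+2) * (n+1).factorial := by
        rw [show n+2 = (n+1)+1 from rfl, Nat.factorial_succ]; push_cast; ring
      rw [hf]
      have h1 : ((n+1).factorial : ℝ) ≠ 0 := Nat.cast_ne_zero.2 (Nat.factorial_ne_zero _)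
      have h2 : (n:ℝ)+2 ≠ 0 := by positivity
      field_simp
      push_cast
      ring
  | (k+1) =>
      rw [if_neg (Nat.succ_ne_zero k)]
      rcases (by omega : 2*k+1 ≤ n ∨ 2*k = n ∨ n < 2*k) with h | h | h
      · obtain ⟨m, rfl⟩ : ∃ m, n = 2*k+1+m := ⟨n - (2*k+1), by omega⟩
        rw [Tt_pos lam (by omega : 2*(k+1) ≤ 2*k+1+m+2), Tt_pos lam (by omega : 2*(k+1) ≤ 2*k+1+m+1),
            show (k+1)-1 = k from rfl, Tt_pos lam (by omega : 2*k ≤ 2*k+1+m)]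
        rw [show 2*k+1+m+2-2*(k+1) = m+1 by omega, show 2*k+1+m+2-(k+1) = (k+m+1)+1 by omega,
            show 2*k+1+m+1-2*(k+1) = m by omega, show 2*k+1+m+1-(k+1) = k+m+1 by omega,
            show 2*k+1+m-2*k = m+1 by omega, show 2*k+1+m-k = k+m+1 by omega]
        rw [pch_succ]
        have h1 : ((k+1).factorial : ℝ) = (k+1) * k.factorial := by
          rw [Nat.factorial_succ]; push_cast; ring
        have h2 : ((m+1).factorial : ℝ) = (m+1) * m.factorial := by
          rw [Nat.factorial_succ]; push_cast; ring
        rw [h1, h2]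
        have hk : (k.factorial : ℝ) ≠ 0 := Nat.cast_ne_zero.2 (Nat.factorial_ne_zero _)
        have hm : (m.factorial : ℝ) ≠ 0 := Nat.cast_ne_zero.2 (Nat.factorial_ne_zero _)
        have hk1 : (k:ℝ)+1 ≠ 0 := by positivity
        have hm1 : (m:ℝ)+1 ≠ 0 := by positivity
        field_simp
        push_cast
        ring
      · obtain rfl : n = 2*k := h.symm
        rw [Tt_pos lam (by omega : 2*(k+1) ≤ 2*k+2),
            show Tt lam (2*k+1) (k+1) = 0 from if_neg (by omega),
            show (k+1)-1 = k from rfl, Tt_pos lam (by omega : 2*k ≤ 2*k)]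
        rw [show 2*k+2-2*(k+1) = 0 by omega, show 2*k+2-(k+1) = k+1 by omega,
            show 2*k-2*k = 0 by omega, show 2*k-k = k by omega]
        rw [pch_succ]
        have h1 : ((k+1).factorial : ℝ) = (k+1) * k.factorial := by
          rw [Nat.factorial_succ]; push_cast; ring
        rw [h1]
        have hk : (k.factorial : ℝ) ≠ 0 := Nat.cast_ne_zero.2 (Nat.factorial_ne_zero _)
        have hk1 : (k:ℝ)+1 ≠ 0 := by positivity
        field_simp
        push_cast
        ring
      · rw [show Tt lam (n+2) (k+1) = 0 from if_neg (by omega),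
            show Tt lam (n+1) (k+1) = 0 from if_neg (by omega),
            show (k+1)-1 = k from rfl, show Tt lam n k = 0 from if_neg (by omega)]
        ring

lemma Asum_rec (lam : ℝ) (n : ℕ) :
    (n+2:ℝ) * Asum lam (n+2) = 2*(lam+n+1) * Asum lam (n+1) - (2*lam+n) * Asum lam n := by
  rw [Asum_eq lam (n+2) (n+3) (by omega), Asum_eq lam (n+1) (n+3) (by omega),
      Asum_eq lam n (n+2) (by omega), Finset.mul_sum, Finset.mul_sum, Finset.mul_sum]
  have key : (∑ j ∈ range (n+3), (if j = 0 then (0:ℝ) else (2*lam+n) * Tt lam n (j-1)))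
      = ∑ j ∈ range (n+2), (2*lam+n) * Tt lam n j := by
    rw [Finset.sum_range_succ' (fun j => if j = 0 then (0:ℝ) else (2*lam+n) * Tt lam n (j-1)) (n+2)]
    simp
  rw [← key, ← Finset.sum_sub_distrib]
  exact Finset.sum_congr rfl fun j _ => term_rec lam n j

lemma Asum_eq_pch (lam : ℝ) (l : ℕ) : Asum lam l = pch (2*lam) l / l.factorial := by
  induction l using Nat.strong_induction_on with
  | _ l ih =>
    match l with
    | 0 => simp [Asum, Tt, pch_zero]
    | 1 => simp [Asum, Tt, pch, Nat.factorial]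
    | (n+2) =>
      have h2 := Asum_rec lam n
      rw [ih (n+1) (by omega), ih n (by omega)] at h2
      have hne : (n:ℝ)+2 ≠ 0 := by positivity
      have : Asum lam (n+2) = (2*(lam+n+1) * (pch (2*lam) (n+1)/(n+1).factorial)
          - (2*lam+n) * (pch (2*lam) n/n.factorial))/(n+2) := by
        rw [eq_div_iff hne, mul_comm, h2]
      rw [this, pch_succ (2*lam) n, show (n+2) = (n+1)+1 from rfl, pch_succ (2*lam) (n+1),
          pch_succ (2*lam) n, Nat.factorial_succ (n+1), Nat.factorial_succ n]
      have hk : (n.factorial : ℝ) ≠ 0 := Nat.cast_ne_zero.2 (Nat.factorial_ne_zero _)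
      have hk1 : (n:ℝ)+1 ≠ 0 := by positivity
      push_cast
      field_simp
      ring

lemma gegenbauer_one' {lam : ℝ} (hlam : 0 < lam) (l : ℕ) :
    gegenbauer lam l 1 = Real.Gamma (2*lam + l) / (Real.Gamma (2*lam) * l.factorial) := by
  have hG : Real.Gamma lam ≠ 0 := (Real.Gamma_pos_of_pos hlam).ne'
  have hG2 : Real.Gamma (2*lam) ≠ 0 := (Real.Gamma_pos_of_pos (by linarith)).ne'
  have hA : gegenbauer lam l 1 = Asum lam l := by
    unfold gegenbauer Asum
    refine Finset.sum_congr rfl fun j hj => ?_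
    rw [Finset.mem_range] at hj
    have hjl : 2*j ≤ l := by omega
    rw [Tt_pos lam hjl]
    have he : lam + l - j = lam + ((l - j : ℕ) : ℝ) := by
      rw [Nat.cast_sub (by omega : j ≤ l)]; ring
    rw [he, gamma_pch hlam, mul_one]
    field_simp
  rw [hA, Asum_eq_pch, gamma_pch (by linarith : (0:ℝ) < 2*lam) l]
  have hF : (l.factorial : ℝ) ≠ 0 := Nat.cast_ne_zero.2 (Nat.factorial_ne_zero _)
  field_simp


lemma geg_cont (lam : ℝ) (l : ℕ) : Continuous (gegenbauer lam l) := by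
  unfold gegenbauer
  exact continuous_finset_sum _ fun j _ =>
    continuous_const.mul ((continuous_const.mul continuous_id).pow _)

lemma den_pos {a t : ℝ} (ha : 0 < a) (ht : t ∈ Icc (-1:ℝ) 1) :
    0 < (1 - a ^ 2) * t + (a ^ 2 + 1) := by
  obtain ⟨h1, h2⟩ := ht
  rcases eq_or_lt_of_le h1 with h | h
  · nlinarith [pow_pos ha 2]
  · nlinarith [pow_pos ha 2, mul_nonneg (le_of_lt (pow_pos ha 2)) (by linarith : (0:ℝ) ≤ 1 - t)]

lemma phi_mem {a t : ℝ} (ha : 0 < a) (ht : t ∈ Icc (-1:ℝ) 1) :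
    phiDil a t ∈ Icc (-1:ℝ) 1 := by
  have hd := den_pos ha ht
  obtain ⟨h1, h2⟩ := ht
  constructor
  · rw [phiDil, le_div_iff₀ hd]; nlinarith [pow_pos ha 2]
  · rw [phiDil, div_le_one hd]; nlinarith [pow_pos ha 2]

lemma phi_tendsto {t : ℝ} (ht : -1 < t) :
    Tendsto (fun a => phiDil a t) (𝓝[>] (0:ℝ)) (𝓝 1) := by
  have hnum : Tendsto (fun a : ℝ => (1 - a ^ 2) + (a ^ 2 + 1) * t) (𝓝[>] (0:ℝ)) (𝓝 (1 + t)) := by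
    have hc : Continuous fun a : ℝ => (1 - a ^ 2) + (a ^ 2 + 1) * t := by continuity
    have h : Tendsto (fun a : ℝ => (1 - a ^ 2) + (a ^ 2 + 1) * t) (𝓝[>] (0:ℝ))
        (𝓝 ((1 - (0:ℝ) ^ 2) + ((0:ℝ) ^ 2 + 1) * t)) := (hc.tendsto 0).mono_left nhdsWithin_le_nhds
    convert h using 2; norm_num
  have hden : Tendsto (fun a : ℝ => (1 - a ^ 2) * t + (a ^ 2 + 1)) (𝓝[>] (0:ℝ)) (𝓝 (t + 1)) := by
    have hc : Continuous fun a : ℝ => (1 - a ^ 2) * t + (a ^ 2 + 1) := by continuity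
    have h : Tendsto (fun a : ℝ => (1 - a ^ 2) * t + (a ^ 2 + 1)) (𝓝[>] (0:ℝ))
        (𝓝 ((1 - (0:ℝ) ^ 2) * t + ((0:ℝ) ^ 2 + 1))) := (hc.tendsto 0).mono_left nhdsWithin_le_nhds
    convert h using 2; norm_num
  have h := hnum.div hden (by linarith : t + 1 ≠ 0)
  have : (1 + t) / (t + 1) = 1 := by rw [add_comm]; exact div_self (by linarith)
  rw [this] at h
  exact h

lemma rpow_base_le_C {p x : ℝ} (h1 : 1 ≤ x) (h2 : x ≤ 2) : x ^ p ≤ max 1 ((2:ℝ)^p) := by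
  rcases le_or_gt 0 p with hp | hp
  · exact le_max_of_le_right (Real.rpow_le_rpow (by linarith) h2 hp)
  · exact le_max_of_le_left (Real.rpow_le_one_of_one_le_of_nonpos h1 hp.le)

lemma w_le {p t : ℝ} (h1 : -1 < t) (h2 : t ≤ 1) :
    (1 - t^2) ^ p ≤ max 1 ((2:ℝ)^p) * ((1-t)^p + (1+t)^p) := by
  have ha : (0:ℝ) ≤ 1 - t := by linarith
  have hb : (0:ℝ) ≤ 1 + t := by linarith
  have hC1 : (1:ℝ) ≤ max 1 ((2:ℝ)^p) := le_max_left _ _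
  have h0a : (0:ℝ) ≤ (1-t)^p := Real.rpow_nonneg ha p
  have h0b : (0:ℝ) ≤ (1+t)^p := Real.rpow_nonneg hb p
  have heq : (1:ℝ) - t^2 = (1-t)*(1+t) := by ring
  rw [heq, Real.mul_rpow ha hb]
  rcases le_total t 0 with h | h
  · have hc := rpow_base_le_C (p := p) (by linarith : (1:ℝ) ≤ 1 - t) (by linarith)
    nlinarith
  · have hc := rpow_base_le_C (p := p) (by linarith : (1:ℝ) ≤ 1 + t) (by linarith)
    nlinarith

lemma int_bound (p : ℝ) (hp : -1 < p) :
    IntervalIntegrable (fun t : ℝ => (1-t)^p + (1+t)^p) volume (-1) 1 := by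
  have h1 : IntervalIntegrable (fun x : ℝ => x ^ p) volume 0 2 := intervalIntegrable_rpow' hp
  have h2 : IntervalIntegrable (fun x : ℝ => (1-x) ^ p) volume (-1) 1 := by
    have h := (h1.comp_sub_left 1).symm
    have e1 : (1:ℝ) - 2 = -1 := by norm_num
    have e2 : (1:ℝ) - 0 = 1 := by norm_num
    rwa [e1, e2] at h
  have h3 : IntervalIntegrable (fun x : ℝ => (1+x) ^ p) volume (-1) 1 := by
    have h := h1.comp_add_left 1
    have e1 : (0:ℝ) - 1 = -1 := by norm_num
    have e2 : (2:ℝ) - 1 = 1 := by norm_num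
    rwa [e1, e2] at h
  exact h2.add h3

/-- For `f ∈ C([-1,1])` and `λ > 0`, the dilated Gegenbauer coefficients satisfy
`lim_{a→0⁺} \hat{f^a}(l) = binom(2λ+l-1,l) · (c(l,λ)/c(0,λ)) · \hat f(0)`; in particular, if
`\hat f(0) = 1` then `lim_{a→0⁺} \hat{f^a}(l) = (λ+l)/λ`. -/
theorem hatDil_tendsto (lam : ℝ) (hlam : 0 < lam) (f : ℝ → ℝ)
    (hf : ContinuousOn f (Set.Icc (-1 : ℝ) 1)) (l : ℕ) :
    Tendsto (fun a => hatDil lam f a l) (𝓝[>] (0 : ℝ))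
      (𝓝 (Real.Gamma (2 * lam + l) / (Real.Gamma (2 * lam) * l.factorial) *
        (cConst lam l / cConst lam 0) *
        (cConst lam 0 * ∫ t in (-1 : ℝ)..1, f t * Real.rpow (1 - t ^ 2) (lam - 1 / 2)))) ∧
    ((cConst lam 0 * ∫ t in (-1 : ℝ)..1, f t * Real.rpow (1 - t ^ 2) (lam - 1 / 2)) = 1 →
      Tendsto (fun a => hatDil lam f a l) (𝓝[>] (0 : ℝ)) (𝓝 ((lam + l) / lam))) := by
  have hp : -1 < lam - 1/2 := by linarith
  have hΓlam : (0:ℝ) < Real.Gamma lam := Real.Gamma_pos_of_pos hlam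
  have hΓ2l : (0:ℝ) < Real.Gamma (2*lam + l) := Real.Gamma_pos_of_pos (by positivity)
  have hΓ2 : (0:ℝ) < Real.Gamma (2*lam) := Real.Gamma_pos_of_pos (by linarith)
  have hfac : ((l.factorial:ℝ)) ≠ 0 := Nat.cast_ne_zero.2 (Nat.factorial_ne_zero _)
  have hc0 : 0 < cConst lam 0 := by
    unfold cConst
    have h1 : (0:ℝ) < Real.rpow 2 (2*lam-1) := Real.rpow_pos_of_pos two_pos _
    have h4 : (0:ℝ) < Real.Gamma (2*lam + ((0:ℕ):ℝ)) := Real.Gamma_pos_of_pos (by push_cast; linarith)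
    have h5 : (0:ℝ) < Real.Gamma (((0:ℕ):ℝ) + 1) := Real.Gamma_pos_of_pos (by push_cast; linarith)
    have h6 : (0:ℝ) < lam + ((0:ℕ):ℝ) := by push_cast; linarith
    exact div_pos (mul_pos (mul_pos (mul_pos h1 (pow_pos hΓlam 2)) h6) h5)
      (mul_pos Real.pi_pos h4)
  have hcl : 0 < cConst lam l := by
    unfold cConst
    have h1 : (0:ℝ) < Real.rpow 2 (2*lam-1) := Real.rpow_pos_of_pos two_pos _
    have h5 : (0:ℝ) < Real.Gamma ((l:ℝ) + 1) := Real.Gamma_pos_of_pos (by positivity)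
    have h6 : (0:ℝ) < lam + (l:ℝ) := by positivity
    exact div_pos (mul_pos (mul_pos (mul_pos h1 (pow_pos hΓlam 2)) h6) h5)
      (mul_pos Real.pi_pos hΓ2l)
  obtain ⟨Mf, hMf⟩ := (isCompact_Icc : IsCompact (Set.Icc (-1:ℝ) 1)).exists_bound_of_continuousOn hf
  obtain ⟨Mg, hMg⟩ :=
    (isCompact_Icc : IsCompact (Set.Icc (-1:ℝ) 1)).exists_bound_of_continuousOn
      (geg_cont lam l).continuousOn
  have hMf0 : 0 ≤ Mf := le_trans (norm_nonneg (f 0)) (hMf 0 (by norm_num))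
  have hMg0 : 0 ≤ Mg := le_trans (norm_nonneg _) (hMg 0 (by norm_num))
  have hIoc : Set.uIoc (-1:ℝ) 1 = Set.Ioc (-1:ℝ) 1 := Set.uIoc_of_le (by norm_num)
  have key : Tendsto (fun a => ∫ t in (-1:ℝ)..1,
        f t * gegenbauer lam l (phiDil a t) * Real.rpow (1 - t ^ 2) (lam - 1 / 2)) (𝓝[>] (0:ℝ))
      (𝓝 (∫ t in (-1:ℝ)..1, f t * gegenbauer lam l 1 * Real.rpow (1 - t ^ 2) (lam - 1 / 2))) := by
    apply intervalIntegral.tendsto_integral_filter_of_dominated_convergence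
      (fun t => Mf * Mg * (max 1 ((2:ℝ)^(lam - 1/2)) * ((1-t)^(lam-1/2) + (1+t)^(lam-1/2))))
    · filter_upwards [self_mem_nhdsWithin] with a ha
      rw [hIoc]
      have hfm : MeasureTheory.AEStronglyMeasurable f (volume.restrict (Set.Ioc (-1:ℝ) 1)) :=
        (hf.mono Set.Ioc_subset_Icc_self).aestronglyMeasurable measurableSet_Ioc
      have hphic : ContinuousOn (fun t => phiDil a t) (Set.Icc (-1:ℝ) 1) := by
        apply ContinuousOn.div (by fun_prop) (by fun_prop)
        exact fun t ht => (den_pos ha ht).ne'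
      have hgm : MeasureTheory.AEStronglyMeasurable (fun t => gegenbauer lam l (phiDil a t))
          (volume.restrict (Set.Ioc (-1:ℝ) 1)) :=
        (((geg_cont lam l).comp_continuousOn hphic).mono
          Set.Ioc_subset_Icc_self).aestronglyMeasurable measurableSet_Ioc
      have hwm : MeasureTheory.AEStronglyMeasurable
          (fun t : ℝ => Real.rpow (1 - t^2) (lam - 1/2)) (volume.restrict (Set.Ioc (-1:ℝ) 1)) := by
        have hwmeas : Measurable (fun t : ℝ => (1 - t^2) ^ (lam - 1/2)) := by fun_prop
        exact hwmeas.aestronglyMeasurable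
      exact (hfm.mul hgm).mul hwm
    · filter_upwards [self_mem_nhdsWithin] with a ha
      refine Eventually.of_forall fun t ht => ?_
      rw [hIoc] at ht
      have htI : t ∈ Set.Icc (-1:ℝ) 1 := Set.Ioc_subset_Icc_self ht
      have hw0 : (0:ℝ) ≤ 1 - t^2 := by nlinarith [htI.1, htI.2]
      have hwn : ‖Real.rpow (1 - t^2) (lam - 1/2)‖ = (1 - t^2) ^ (lam - 1/2) :=
        Real.norm_of_nonneg (Real.rpow_nonneg hw0 _)
      rw [norm_mul, norm_mul, hwn]
      have h1 : ‖f t‖ ≤ Mf := hMf t htI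
      have h2 : ‖gegenbauer lam l (phiDil a t)‖ ≤ Mg := hMg _ (phi_mem ha htI)
      have h3 := w_le (p := lam - 1/2) ht.1 htI.2
      have h4 : (0:ℝ) ≤ (1 - t^2) ^ (lam - 1/2) := Real.rpow_nonneg hw0 _
      calc ‖f t‖ * ‖gegenbauer lam l (phiDil a t)‖ * ((1 - t^2) ^ (lam - 1/2))
          ≤ Mf * Mg * ((1 - t^2) ^ (lam - 1/2)) :=
            mul_le_mul_of_nonneg_right (mul_le_mul h1 h2 (norm_nonneg _) hMf0) h4
        _ ≤ Mf * Mg * (max 1 ((2:ℝ)^(lam - 1/2)) * ((1-t)^(lam-1/2) + (1+t)^(lam-1/2))) :=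
            mul_le_mul_of_nonneg_left h3 (by positivity)
    · exact ((int_bound _ hp).const_mul _).const_mul _
    · refine Eventually.of_forall fun t ht => ?_
      rw [hIoc] at ht
      exact (tendsto_const_nhds.mul
        (((geg_cont lam l).tendsto 1).comp (phi_tendsto ht.1))).mul tendsto_const_nhds
  set G1 := Real.Gamma (2 * lam + l) / (Real.Gamma (2 * lam) * l.factorial) with hG1def
  set I := ∫ t in (-1:ℝ)..1, f t * Real.rpow (1 - t ^ 2) (lam - 1 / 2) with hIdef
  have hint : (∫ t in (-1:ℝ)..1, f t * gegenbauer lam l 1 * Real.rpow (1 - t ^ 2) (lam - 1 / 2))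
      = G1 * I := by
    rw [hIdef, ← intervalIntegral.integral_const_mul]
    congr 1
    funext t
    rw [gegenbauer_one' hlam l, ← hG1def]
    ring
  have main : Tendsto (fun a => hatDil lam f a l) (𝓝[>] (0:ℝ)) (𝓝 (cConst lam l * (G1 * I))) := by
    have h := Tendsto.const_mul (cConst lam l) key
    rw [hint] at h
    exact h
  have hval1 : cConst lam l * (G1 * I) = G1 * (cConst lam l / cConst lam 0) * (cConst lam 0 * I) := by
    field_simp
  refine ⟨by rw [← hval1]; exact main, fun h1 => ?_⟩
  have hval2 : G1 * (cConst lam l / cConst lam 0) = (lam + l) / lam := by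
    rw [hG1def]
    unfold cConst
    rw [Real.Gamma_nat_eq_factorial l]
    push_cast
    norm_num [Real.Gamma_one]
    have h2 : Real.rpow 2 (2*lam-1) ≠ 0 := (Real.rpow_pos_of_pos two_pos _).ne'
    field_simp
  rw [hval1, h1, mul_one, hval2] at main
  exact main
end

section
/- The Jacobi-polynomial asymptotic (Mehler–Heine type): for fixed r>0 and λ≥0, lim_{l→∞} l^{-λ} P_l^{(λ,λ)}(cos(r/l)) = (r/2)^{-λ} J_λ(r), where P_l^{(λ,λ)} is the ultraspherical Jacobi polynomial and J_λ the Bessel function. -/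
open Filter Topology

/-- Bessel function of the first kind `J_ν(x) = ∑_m (-1)^m/(m! Γ(m+ν+1)) (x/2)^{2m+ν}`. -/
noncomputable def besselJ (ν x : ℝ) : ℝ :=
  ∑' m : ℕ, (-1 : ℝ) ^ m / (m.factorial * Real.Gamma (m + ν + 1)) *
    (x / 2) ^ (2 * m) * Real.rpow (x / 2) ν

/-- The ultraspherical Jacobi polynomial `P_l^{(α,α)}`, expressed through the Gegenbauer
polynomial of order `α+1/2` via
`C_l^λ(t) = Γ(l+2λ)Γ(λ+1/2)/(Γ(2λ)Γ(λ+l+1/2)) · P_l^{(λ-1/2,λ-1/2)}(t)`. -/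
noncomputable def jacobiUltra (α : ℝ) (l : ℕ) (t : ℝ) : ℝ :=
  Real.Gamma (2 * α + 1) * Real.Gamma (α + l + 1) /
    (Real.Gamma (l + 2 * α + 1) * Real.Gamma (α + 1)) * gegenbauer (α + 1 / 2) l t

/-- coefficient of the hypergeometric form -/
noncomputable def mhC (lam : ℝ) (l k : ℕ) : ℝ :=
  (-1 : ℝ) ^ k * Real.Gamma ((l : ℝ) + 2 * lam + 1 + k) /
    (k.factorial * (l - k).factorial * Real.Gamma (lam + 1 + k))

noncomputable def mhH (lam : ℝ) (l : ℕ) (s : ℝ) : ℝ :=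
  ∑ k ∈ Finset.range (l + 1), mhC lam l k * s ^ k

lemma gegenbauer_padded (lam : ℝ) (l N : ℕ) (hN : l / 2 + 1 ≤ N) (t : ℝ) :
    gegenbauer lam l t = ∑ j ∈ Finset.range N, if 2 * j ≤ l then
      (-1 : ℝ) ^ j * Real.Gamma (lam + l - j) /
        (j.factorial * (l - 2 * j).factorial * Real.Gamma lam) * (2 * t) ^ (l - 2 * j)
      else 0 := by
  rw [gegenbauer]
  rw [Finset.sum_congr rfl (fun j hj => (if_pos (by
      simp only [Finset.mem_range] at hj; omega : 2 * j ≤ l)).symm)]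
  exact Finset.sum_subset (Finset.range_subset_range.2 hN) (fun x _ hx => by
    rw [if_neg]; simp only [Finset.mem_range] at hx; omega)

lemma mhH_padded (lam : ℝ) (l N : ℕ) (hN : l + 1 ≤ N) (s : ℝ) :
    mhH lam l s = ∑ k ∈ Finset.range N, if k ≤ l then mhC lam l k * s ^ k else 0 := by
  rw [mhH]
  rw [Finset.sum_congr rfl (fun k hk => (if_pos (by
      simp only [Finset.mem_range] at hk; omega : k ≤ l)).symm)]
  exact Finset.sum_subset (Finset.range_subset_range.2 hN) (fun x _ hx => by
    rw [if_neg]; simp only [Finset.mem_range] at hx; omega)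

lemma gegenbauer_zero (lam : ℝ) (hlam : 0 < lam) (t : ℝ) : gegenbauer lam 0 t = 1 := by
  have h : Real.Gamma lam ≠ 0 := ne_of_gt (Real.Gamma_pos_of_pos hlam)
  simp [gegenbauer, h]

lemma gegenbauer_one (lam : ℝ) (hlam : 0 < lam) (t : ℝ) :
    gegenbauer lam 1 t = 2 * lam * t := by
  have h : Real.Gamma lam ≠ 0 := ne_of_gt (Real.Gamma_pos_of_pos hlam)
  simp only [gegenbauer]
  norm_num
  rw [show lam + 1 = lam + 1 by ring, Real.Gamma_add_one (ne_of_gt hlam)]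
  field_simp

lemma gegenbauer_rec (lam : ℝ) (hlam : 0 ≤ lam) (l : ℕ) (t : ℝ) :
    ((l : ℝ) + 2) * gegenbauer (lam + 1/2) (l + 2) t
      = 2 * t * (lam + (l : ℝ) + 3/2) * gegenbauer (lam + 1/2) (l + 1) t
        - ((l : ℝ) + 2 * lam + 1) * gegenbauer (lam + 1/2) l t := by
  have hG : Real.Gamma (lam + 1/2) ≠ 0 :=
    ne_of_gt (Real.Gamma_pos_of_pos (by linarith))
  rw [gegenbauer_padded _ (l+2) (l+3) (by omega), gegenbauer_padded _ (l+1) (l+3) (by omega),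
    gegenbauer_padded _ l (l+2) (by omega), Finset.mul_sum, Finset.mul_sum, Finset.mul_sum]
  have hshift : ∑ j ∈ Finset.range (l+2), (((l : ℝ) + 2 * lam + 1) *
        if 2 * j ≤ l then
          (-1 : ℝ) ^ j * Real.Gamma (lam + 1/2 + l - j) /
            (j.factorial * (l - 2 * j).factorial * Real.Gamma (lam + 1/2)) * (2*t) ^ (l - 2*j)
        else 0)
      = ∑ j ∈ Finset.range (l+3), (if j = 0 then 0 else ((l : ℝ) + 2 * lam + 1) *
          if 2 * (j-1) ≤ l then
            (-1 : ℝ) ^ (j-1) * Real.Gamma (lam + 1/2 + (l : ℝ) - ((j - 1 : ℕ) : ℝ)) /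
              ((j-1).factorial * (l - 2 * (j-1)).factorial * Real.Gamma (lam + 1/2)) *
                (2*t) ^ (l - 2*(j-1))
          else 0) := by
    rw [Finset.sum_range_succ' _ (l+2)]
    simp
  rw [hshift, ← Finset.sum_sub_distrib]
  apply Finset.sum_congr rfl
  intro j hj
  simp only [Finset.mem_range] at hj
  match j with
  | 0 =>
    rw [if_pos (by omega), if_pos (by omega), if_pos rfl]
    simp only [Nat.cast_zero, mul_zero, Nat.sub_zero, pow_zero, Nat.factorial_zero,
      Nat.cast_one, one_mul, sub_zero]
    rw [show lam + 1/2 + ((l+2 : ℕ) : ℝ) = (lam + 1/2 + ((l+1 : ℕ) : ℝ)) + 1 by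
        push_cast; ring,
      Real.Gamma_add_one (by positivity)]
    have hf2 : (((l+2).factorial : ℕ) : ℝ) = ((l:ℝ)+2) * ((l+1).factorial : ℝ) := by
      rw [show l+2 = (l+1)+1 from rfl, Nat.factorial_succ]; push_cast; ring
    have hf : ((l+1).factorial : ℝ) ≠ 0 := Nat.cast_ne_zero.2 (Nat.factorial_ne_zero _)
    rw [hf2, show l+2 = (l+1)+1 from rfl, pow_succ]
    push_cast
    field_simp
    ring
  | (j' + 1) =>
    by_cases h1 : 2 * (j' + 1) ≤ l
    · -- main branch
      obtain ⟨a, rfl⟩ : ∃ a, l = 2*(j'+1)+a := ⟨l - 2*(j'+1), by omega⟩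
      rw [if_pos (by omega), if_pos (by omega), if_neg (by omega : ¬ j'+1 = 0),
        if_pos (by omega)]
      have hX : (0:ℝ) < lam + 1/2 + (j':ℝ) + a + 2 := by
        have h1 : (0:ℝ) ≤ (j':ℝ) := Nat.cast_nonneg _
        have h2 : (0:ℝ) ≤ (a:ℝ) := Nat.cast_nonneg _
        linarith
      rw [show (2*(j'+1)+a+2) - 2*(j'+1) = a + 2 from by omega,
        show (2*(j'+1)+a+1) - 2*(j'+1) = a + 1 from by omega,
        show (j'+1) - 1 = j' from rfl,
        show (2*(j'+1)+a) - 2*j' = a + 2 from by omega,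
        show lam + 1/2 + ((2*(j'+1)+a+2 : ℕ) : ℝ) - ((j'+1 : ℕ) : ℝ)
            = (lam + 1/2 + (j':ℝ) + a + 2) + 1 by push_cast; ring,
        Real.Gamma_add_one (ne_of_gt hX),
        show lam + 1/2 + ((2*(j'+1)+a+1 : ℕ) : ℝ) - ((j'+1 : ℕ) : ℝ)
            = lam + 1/2 + (j':ℝ) + a + 2 by push_cast; ring,
        show lam + 1/2 + ((2*(j'+1)+a : ℕ) : ℝ) - ((j' : ℕ) : ℝ)
            = lam + 1/2 + (j':ℝ) + a + 2 by push_cast; ring]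
      have hfj : (((j'+1).factorial : ℕ) : ℝ) = ((j':ℝ) + 1) * (j'.factorial : ℝ) := by
        rw [Nat.factorial_succ]; push_cast; ring
      have hfa2 : (((a+2).factorial : ℕ) : ℝ)
          = ((a:ℝ)+2) * (((a:ℝ)+1) * (a.factorial : ℝ)) := by
        rw [show a+2 = (a+1)+1 from rfl, Nat.factorial_succ, Nat.factorial_succ]
        push_cast; ring
      have hfa1 : (((a+1).factorial : ℕ) : ℝ) = ((a:ℝ)+1) * (a.factorial : ℝ) := by
        rw [Nat.factorial_succ]; push_cast; ring
      rw [hfj, hfa2, hfa1, pow_succ (-1 : ℝ) j']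
      have hf1 : ((j').factorial : ℝ) ≠ 0 := Nat.cast_ne_zero.2 (Nat.factorial_ne_zero _)
      have hf2 : ((a).factorial : ℝ) ≠ 0 := Nat.cast_ne_zero.2 (Nat.factorial_ne_zero _)
      have hGX : Real.Gamma (lam + 1/2 + (j':ℝ) + a + 2) ≠ 0 :=
        ne_of_gt (Real.Gamma_pos_of_pos hX)
      push_cast
      field_simp
      ring
    · by_cases h2 : 2 * (j' + 1) = l + 1
      · -- l odd, j = (l+1)/2
        obtain rfl : l = 2*j'+1 := by omega
        rw [if_pos (by omega), if_pos (by omega), if_neg (by omega : ¬ j'+1 = 0),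
          if_pos (by omega)]
        have hX : (0:ℝ) < lam + 1/2 + (j':ℝ) + 1 := by
          have h1 : (0:ℝ) ≤ (j':ℝ) := Nat.cast_nonneg _
          linarith
        rw [show (2*j'+1+2) - 2*(j'+1) = 1 from by omega,
          show (2*j'+1+1) - 2*(j'+1) = 0 from by omega,
          show (j'+1) - 1 = j' from rfl,
          show (2*j'+1) - 2*j' = 1 from by omega,
          show lam + 1/2 + ((2*j'+1+2 : ℕ) : ℝ) - ((j'+1 : ℕ) : ℝ)
              = (lam + 1/2 + (j':ℝ) + 1) + 1 by push_cast; ring,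
          Real.Gamma_add_one (ne_of_gt hX),
          show lam + 1/2 + ((2*j'+1+1 : ℕ) : ℝ) - ((j'+1 : ℕ) : ℝ)
              = lam + 1/2 + (j':ℝ) + 1 by push_cast; ring,
          show lam + 1/2 + ((2*j'+1 : ℕ) : ℝ) - ((j' : ℕ) : ℝ)
              = lam + 1/2 + (j':ℝ) + 1 by push_cast; ring]
        have hfj : (((j'+1).factorial : ℕ) : ℝ) = ((j':ℝ) + 1) * (j'.factorial : ℝ) := by
          rw [Nat.factorial_succ]; push_cast; ring
        rw [hfj, pow_succ (-1 : ℝ) j']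
        simp only [Nat.factorial_one, Nat.factorial_zero, pow_zero, pow_one,
          Nat.cast_one, one_mul, mul_one]
        have hf1 : ((j').factorial : ℝ) ≠ 0 := Nat.cast_ne_zero.2 (Nat.factorial_ne_zero _)
        have hGX : Real.Gamma (lam + 1/2 + (j':ℝ) + 1) ≠ 0 :=
          ne_of_gt (Real.Gamma_pos_of_pos hX)
        push_cast
        field_simp
        ring
      · by_cases h3 : 2 * (j' + 1) = l + 2
        · -- l even, j = (l+2)/2
          obtain rfl : l = 2*j' := by omega
          rw [if_pos (by omega), if_neg (by omega), if_neg (by omega : ¬ j'+1 = 0),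
            if_pos (by omega)]
          have hX : (0:ℝ) < lam + 1/2 + (j':ℝ) := by
            have h1 : (0:ℝ) ≤ (j':ℝ) := Nat.cast_nonneg _
            linarith
          rw [show (2*j'+2) - 2*(j'+1) = 0 from by omega,
            show (j'+1) - 1 = j' from rfl,
            show (2*j') - 2*j' = 0 from by omega,
            show lam + 1/2 + ((2*j'+2 : ℕ) : ℝ) - ((j'+1 : ℕ) : ℝ)
                = (lam + 1/2 + (j':ℝ)) + 1 by push_cast; ring,
            Real.Gamma_add_one (ne_of_gt hX),
            show lam + 1/2 + ((2*j' : ℕ) : ℝ) - ((j' : ℕ) : ℝ)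
                = lam + 1/2 + (j':ℝ) by push_cast; ring]
          have hfj : (((j'+1).factorial : ℕ) : ℝ) = ((j':ℝ) + 1) * (j'.factorial : ℝ) := by
            rw [Nat.factorial_succ]; push_cast; ring
          rw [hfj, pow_succ (-1 : ℝ) j']
          simp only [Nat.factorial_zero, pow_zero, Nat.cast_one, one_mul, mul_one]
          have hf1 : ((j').factorial : ℝ) ≠ 0 := Nat.cast_ne_zero.2 (Nat.factorial_ne_zero _)
          have hGX : Real.Gamma (lam + 1/2 + (j':ℝ)) ≠ 0 :=
            ne_of_gt (Real.Gamma_pos_of_pos hX)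
          push_cast
          field_simp
          ring
        · rw [if_neg (by omega), if_neg (by omega), if_neg (by omega : ¬ j'+1 = 0),
            if_neg (by omega)]
          ring

lemma mhH_rec (lam : ℝ) (hlam : 0 ≤ lam) (l : ℕ) (s : ℝ) :
    ((l : ℝ) + 2) * mhH lam (l+2) s
      = 2 * (1 - 2*s) * (lam + (l : ℝ) + 3/2) * mhH lam (l+1) s
        - ((l : ℝ) + 2 * lam + 1) * mhH lam l s := by
  have hsplit : 2 * (1 - 2*s) * (lam + (l:ℝ) + 3/2) * mhH lam (l+1) s
      = 2 * (lam + (l:ℝ) + 3/2) * mhH lam (l+1) s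
        - 4 * (lam + (l:ℝ) + 3/2) * (s * mhH lam (l+1) s) := by ring
  rw [hsplit]
  have hs : s * mhH lam (l+1) s = ∑ k ∈ Finset.range (l+3),
      (if k = 0 then 0 else if k - 1 ≤ l + 1 then mhC lam (l+1) (k-1) * s^k else 0) := by
    rw [mhH_padded lam (l+1) (l+2) (by omega), Finset.mul_sum]
    rw [Finset.sum_range_succ'
      (fun k => if k = 0 then 0 else if k - 1 ≤ l + 1 then mhC lam (l+1) (k-1) * s^k else 0)
      (l+2)]
    simp only [Nat.add_sub_cancel, Nat.succ_ne_zero, if_false, if_true,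
      eq_self_iff_true, add_zero]
    apply Finset.sum_congr rfl
    intro k _
    split_ifs <;> ring
  rw [hs, mhH_padded lam (l+2) (l+3) (by omega), mhH_padded lam (l+1) (l+3) (by omega),
    mhH_padded lam l (l+3) (by omega), Finset.mul_sum, Finset.mul_sum, Finset.mul_sum,
    Finset.mul_sum, ← Finset.sum_sub_distrib, ← Finset.sum_sub_distrib]
  apply Finset.sum_congr rfl
  intro k hk
  simp only [Finset.mem_range] at hk
  have hGlam : Real.Gamma (lam + 1) ≠ 0 :=
    ne_of_gt (Real.Gamma_pos_of_pos (by linarith))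
  match k with
  | 0 =>
    rw [if_pos (by omega), if_pos (by omega), if_pos rfl, if_pos (by omega)]
    simp only [mhC, Nat.cast_zero, Nat.sub_zero, pow_zero, Nat.factorial_zero, Nat.cast_one,
      one_mul, mul_one, add_zero, mul_zero, sub_zero]
    have hX : (0:ℝ) < (l:ℝ) + 2*lam + 1 := by
      have := Nat.cast_nonneg (α := ℝ) l; linarith
    rw [show ((l+2:ℕ):ℝ) + 2*lam + 1 = (((l:ℝ) + 2*lam + 2)) + 1 by push_cast; ring,
      Real.Gamma_add_one (by positivity),
      show ((l:ℝ) + 2*lam + 2) = ((l:ℝ) + 2*lam + 1) + 1 by ring,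
      Real.Gamma_add_one (ne_of_gt hX),
      show ((l+1:ℕ):ℝ) + 2*lam + 1 = (((l:ℝ) + 2*lam + 1)) + 1 by push_cast; ring,
      Real.Gamma_add_one (ne_of_gt hX)]
    have hf2 : (((l+2).factorial : ℕ) : ℝ)
        = ((l:ℝ)+2) * (((l:ℝ)+1) * (l.factorial : ℝ)) := by
      rw [show l+2 = (l+1)+1 from rfl, Nat.factorial_succ, Nat.factorial_succ]
      push_cast; ring
    have hf1 : (((l+1).factorial : ℕ) : ℝ) = ((l:ℝ)+1) * (l.factorial : ℝ) := by
      rw [Nat.factorial_succ]; push_cast; ring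
    rw [hf2, hf1]
    have hf : ((l).factorial : ℝ) ≠ 0 := Nat.cast_ne_zero.2 (Nat.factorial_ne_zero _)
    field_simp
    ring
  | (k' + 1) =>
    by_cases h1 : k' + 1 ≤ l
    · obtain ⟨a, rfl⟩ : ∃ a, l = (k'+1)+a := ⟨l - (k'+1), by omega⟩
      rw [if_pos (by omega), if_pos (by omega), if_neg (by omega : ¬ k'+1 = 0),
        if_pos (by omega), if_pos (by omega)]
      simp only [mhC, show (k'+1) - 1 = k' from rfl]
      have hXpos : (0:ℝ) < 2*(k':ℝ) + a + 2*lam + 3 := by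
        have h1 : (0:ℝ) ≤ (k':ℝ) := Nat.cast_nonneg _
        have h2 : (0:ℝ) ≤ (a:ℝ) := Nat.cast_nonneg _
        linarith
      have hYpos : (0:ℝ) < lam + 1 + (k':ℝ) := by
        have h1 : (0:ℝ) ≤ (k':ℝ) := Nat.cast_nonneg _
        linarith
      rw [show ((k'+1)+a+2 - (k'+1)) = a + 2 from by omega,
        show ((k'+1)+a+1 - (k'+1)) = a + 1 from by omega,
        show ((k'+1)+a - (k'+1)) = a from by omega,
        show ((k'+1)+a+1 - k') = a + 2 from by omega,
        show (((k'+1)+a+2 : ℕ) : ℝ) + 2*lam + 1 + ((k'+1 : ℕ) : ℝ)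
            = ((2*(k':ℝ) + a + 2*lam + 3) + 1) + 1 by push_cast; ring,
        Real.Gamma_add_one (by positivity),
        Real.Gamma_add_one (ne_of_gt hXpos),
        show (((k'+1)+a+1 : ℕ) : ℝ) + 2*lam + 1 + ((k'+1 : ℕ) : ℝ)
            = (2*(k':ℝ) + a + 2*lam + 3) + 1 by push_cast; ring,
        Real.Gamma_add_one (ne_of_gt hXpos),
        show (((k'+1)+a : ℕ) : ℝ) + 2*lam + 1 + ((k'+1 : ℕ) : ℝ)
            = 2*(k':ℝ) + a + 2*lam + 3 by push_cast; ring,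
        show (((k'+1)+a+1 : ℕ) : ℝ) + 2*lam + 1 + ((k' : ℕ) : ℝ)
            = 2*(k':ℝ) + a + 2*lam + 3 by push_cast; ring,
        show lam + 1 + ((k'+1 : ℕ) : ℝ) = (lam + 1 + (k':ℝ)) + 1 by push_cast; ring,
        Real.Gamma_add_one (ne_of_gt hYpos)]
      have hfk : (((k'+1).factorial : ℕ) : ℝ) = ((k':ℝ) + 1) * (k'.factorial : ℝ) := by
        rw [Nat.factorial_succ]; push_cast; ring
      have hfa2 : (((a+2).factorial : ℕ) : ℝ)
          = ((a:ℝ)+2) * (((a:ℝ)+1) * (a.factorial : ℝ)) := by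
        rw [show a+2 = (a+1)+1 from rfl, Nat.factorial_succ, Nat.factorial_succ]
        push_cast; ring
      have hfa1 : (((a+1).factorial : ℕ) : ℝ) = ((a:ℝ)+1) * (a.factorial : ℝ) := by
        rw [Nat.factorial_succ]; push_cast; ring
      rw [hfk, hfa2, hfa1, pow_succ (-1 : ℝ) k', pow_succ s k']
      have hf1 : ((k').factorial : ℝ) ≠ 0 := Nat.cast_ne_zero.2 (Nat.factorial_ne_zero _)
      have hf2 : ((a).factorial : ℝ) ≠ 0 := Nat.cast_ne_zero.2 (Nat.factorial_ne_zero _)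
      have hGX : Real.Gamma (2*(k':ℝ) + a + 2*lam + 3) ≠ 0 :=
        ne_of_gt (Real.Gamma_pos_of_pos hXpos)
      have hGY : Real.Gamma (lam + 1 + (k':ℝ)) ≠ 0 :=
        ne_of_gt (Real.Gamma_pos_of_pos hYpos)
      push_cast
      field_simp
      ring
    · by_cases h2 : k' + 1 = l + 1
      · obtain rfl : l = k' := by omega
        rw [if_pos (by omega), if_pos (by omega), if_neg (by omega : ¬ l+1 = 0),
          if_pos (by omega), if_neg (by omega)]
        simp only [mhC, show (l+1) - 1 = l from rfl]
        have hXpos : (0:ℝ) < 2*(l:ℝ) + 2*lam + 2 := by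
          have h0 : (0:ℝ) ≤ (l:ℝ) := Nat.cast_nonneg _
          linarith
        have hYpos : (0:ℝ) < lam + 1 + (l:ℝ) := by
          have h0 : (0:ℝ) ≤ (l:ℝ) := Nat.cast_nonneg _
          linarith
        rw [show (l+2 - (l+1)) = 1 from by omega,
          show (l+1 - (l+1)) = 0 from by omega,
          show (l+1 - l) = 1 from by omega,
          show ((l+2 : ℕ) : ℝ) + 2*lam + 1 + ((l+1 : ℕ) : ℝ)
              = ((2*(l:ℝ) + 2*lam + 2) + 1) + 1 by push_cast; ring,
          Real.Gamma_add_one (by positivity),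
          Real.Gamma_add_one (ne_of_gt hXpos),
          show ((l+1 : ℕ) : ℝ) + 2*lam + 1 + ((l+1 : ℕ) : ℝ)
              = (2*(l:ℝ) + 2*lam + 2) + 1 by push_cast; ring,
          Real.Gamma_add_one (ne_of_gt hXpos),
          show ((l+1 : ℕ) : ℝ) + 2*lam + 1 + ((l : ℕ) : ℝ)
              = 2*(l:ℝ) + 2*lam + 2 by push_cast; ring,
          show lam + 1 + ((l+1 : ℕ) : ℝ) = (lam + 1 + (l:ℝ)) + 1 by push_cast; ring,
          Real.Gamma_add_one (ne_of_gt hYpos)]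
        have hfk : (((l+1).factorial : ℕ) : ℝ) = ((l:ℝ) + 1) * (l.factorial : ℝ) := by
          rw [Nat.factorial_succ]; push_cast; ring
        rw [hfk, pow_succ (-1 : ℝ) l]
        simp only [Nat.factorial_one, Nat.factorial_zero, Nat.cast_one, one_mul, mul_one]
        have hf1 : ((l).factorial : ℝ) ≠ 0 := Nat.cast_ne_zero.2 (Nat.factorial_ne_zero _)
        have hGX : Real.Gamma (2*(l:ℝ) + 2*lam + 2) ≠ 0 :=
          ne_of_gt (Real.Gamma_pos_of_pos hXpos)
        have hGY : Real.Gamma (lam + 1 + (l:ℝ)) ≠ 0 :=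
          ne_of_gt (Real.Gamma_pos_of_pos hYpos)
        push_cast
        field_simp
        ring
      · by_cases h3 : k' + 1 = l + 2
        · obtain rfl : k' = l + 1 := by omega
          rw [if_pos (by omega), if_neg (by omega), if_neg (by omega : ¬ l+1+1 = 0),
            if_pos (by omega), if_neg (by omega)]
          simp only [mhC, show (l+1+1) - 1 = l+1 from rfl]
          have h0 : (0:ℝ) ≤ (l:ℝ) := Nat.cast_nonneg _
          have hZpos : (0:ℝ) < 2*(l:ℝ) + 2*lam + 3 := by linarith
          have hY' : lam + 1 + ((l+1:ℕ):ℝ) ≠ 0 := by push_cast; intro hc; linarith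
          rw [show (l+2 - (l+1+1)) = 0 from by omega,
            show (l+1 - (l+1)) = 0 from by omega,
            show ((l+2 : ℕ) : ℝ) + 2*lam + 1 + ((l+1+1 : ℕ) : ℝ)
                = ((2*(l:ℝ) + 2*lam + 3) + 1) + 1 by push_cast; ring,
            Real.Gamma_add_one (by positivity),
            Real.Gamma_add_one (ne_of_gt hZpos),
            show ((l+1 : ℕ) : ℝ) + 2*lam + 1 + ((l+1 : ℕ) : ℝ)
                = 2*(l:ℝ) + 2*lam + 3 by push_cast; ring,
            show lam + 1 + ((l+1+1 : ℕ) : ℝ) = (lam + 1 + ((l+1:ℕ):ℝ)) + 1 by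
              push_cast; ring,
            Real.Gamma_add_one hY']
          have hfk2 : (((l+2).factorial : ℕ) : ℝ) = ((l:ℝ)+2) * ((l+1).factorial : ℝ) := by
            rw [show l+2 = (l+1)+1 from rfl, Nat.factorial_succ]; push_cast; ring
          rw [hfk2, pow_succ (-1 : ℝ) (l+1)]
          simp only [Nat.factorial_zero, Nat.cast_one, one_mul, mul_one]
          have hf1 : (((l+1)).factorial : ℝ) ≠ 0 := Nat.cast_ne_zero.2 (Nat.factorial_ne_zero _)
          have hGZ : Real.Gamma (2*(l:ℝ) + 2*lam + 3) ≠ 0 :=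
            ne_of_gt (Real.Gamma_pos_of_pos hZpos)
          have hGY : Real.Gamma (lam + 1 + ((l+1:ℕ):ℝ)) ≠ 0 :=
            ne_of_gt (Real.Gamma_pos_of_pos (by push_cast; linarith))
          push_cast
          field_simp
          ring
        · rw [if_neg (by omega), if_neg (by omega), if_neg (by omega : ¬ k'+1 = 0),
            if_neg (by omega)]
          split_ifs <;> ring

lemma mhH_zero (lam : ℝ) (s : ℝ) :
    mhH lam 0 s = Real.Gamma (2*lam+1) / Real.Gamma (lam+1) := by
  simp only [mhH, Finset.sum_range_one, mhC]
  norm_num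

lemma mhH_one (lam : ℝ) (hlam : 0 ≤ lam) (s : ℝ) :
    mhH lam 1 s = Real.Gamma (2*lam+1) / Real.Gamma (lam+1) * ((2*lam+1) * (1 - 2*s)) := by
  have hGlam : Real.Gamma (lam + 1) ≠ 0 :=
    ne_of_gt (Real.Gamma_pos_of_pos (by linarith))
  have hX : (0:ℝ) < 2*lam + 1 := by linarith
  have hl1 : (0:ℝ) < lam + 1 := by linarith
  simp only [mhH, Finset.sum_range_succ, Finset.sum_range_one, mhC]
  norm_num
  rw [show ((1:ℝ) + 2*lam + 1) = (2*lam+1) + 1 by ring,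
    Real.Gamma_add_one (ne_of_gt hX),
    Real.Gamma_add_one (by positivity : (2*lam+1+1 : ℝ) ≠ 0),
    Real.Gamma_add_one (ne_of_gt hX),
    Real.Gamma_add_one (ne_of_gt hl1)]
  field_simp
  ring

lemma gegen_eq_mhH (lam : ℝ) (hlam : 0 ≤ lam) (l : ℕ) (t : ℝ) :
    gegenbauer (lam + 1/2) l t
      = Real.Gamma (lam+1) / Real.Gamma (2*lam+1) * mhH lam l ((1-t)/2) := by
  have hGlam : Real.Gamma (lam + 1) ≠ 0 :=
    ne_of_gt (Real.Gamma_pos_of_pos (by linarith))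
  have hG2lam : Real.Gamma (2*lam + 1) ≠ 0 :=
    ne_of_gt (Real.Gamma_pos_of_pos (by linarith))
  induction l using Nat.twoStepInduction with
  | zero =>
    rw [gegenbauer_zero _ (by linarith), mhH_zero]
    field_simp
  | one =>
    rw [gegenbauer_one _ (by linarith), mhH_one lam hlam]
    rw [show (1 - 2*((1-t)/2) : ℝ) = t by ring]
    field_simp
  | more l ih1 ih2 =>
    have hrecG := gegenbauer_rec lam hlam l t
    have hrecH := mhH_rec lam hlam l ((1-t)/2)
    rw [ih1, ih2] at hrecG
    have hl2 : ((l:ℝ) + 2) ≠ 0 := by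
      have h0 : (0:ℝ) ≤ (l:ℝ) := Nat.cast_nonneg _
      intro hc; linarith
    apply mul_left_cancel₀ hl2
    rw [hrecG]
    rw [show (1 - 2*((1-t)/2) : ℝ) = t by ring] at hrecH
    rw [show ((l:ℝ)+2) * (Real.Gamma (lam+1) / Real.Gamma (2*lam+1) * mhH lam (l+2) ((1-t)/2))
        = Real.Gamma (lam+1) / Real.Gamma (2*lam+1) * (((l:ℝ)+2) * mhH lam (l+2) ((1-t)/2))
        by ring, hrecH]
    ring

lemma Gamma_add_nat (x : ℝ) (hx : 0 < x) (k : ℕ) :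
    Real.Gamma (x + k) = (∏ i ∈ Finset.range k, (x + i)) * Real.Gamma x := by
  induction k with
  | zero => simp
  | succ k ih =>
    have : x + ((k+1 : ℕ) : ℝ) = (x + k) + 1 := by push_cast; ring
    rw [this, Real.Gamma_add_one (by positivity), ih, Finset.prod_range_succ]
    ring

lemma factorial_ratio (l k : ℕ) (h : k ≤ l) :
    ((l.factorial : ℕ) : ℝ)
      = (∏ i ∈ Finset.range k, ((l:ℝ) - i)) * (((l-k).factorial : ℕ) : ℝ) := by
  induction k with
  | zero => simp
  | succ k ih =>
    have hk : k ≤ l := by omega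
    rw [ih hk, Finset.prod_range_succ]
    have h1 : l - k = (l - (k+1)) + 1 := by omega
    rw [h1, Nat.factorial_succ]
    have h2 : ((l - (k+1) + 1 : ℕ) : ℝ) = (l:ℝ) - k := by
      have := Nat.cast_sub (show k+1 ≤ l from h) (R := ℝ)
      push_cast [Nat.cast_sub (show k+1 ≤ l from h)]
      ring
    push_cast [Nat.cast_sub (show k+1 ≤ l from h)] at *
    rw [show ((l:ℝ) - (↑k+1) + 1) = (l:ℝ) - k by ring]
    ring

lemma gamma_wendel_upper {x σ : ℝ} (hx : 0 < x) (h0 : 0 ≤ σ) (h1 : σ ≤ 1) :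
    Real.Gamma (x + σ) ≤ Real.Gamma x * x ^ σ := by
  rcases eq_or_lt_of_le h0 with h | h0'
  · simp [← h]
  rcases eq_or_lt_of_le h1 with h | h1'
  · rw [h, Real.rpow_one, Real.Gamma_add_one (ne_of_gt hx)]; ring_nf; exact le_refl _
  have key := Real.Gamma_mul_add_mul_le_rpow_Gamma_mul_rpow_Gamma hx
    (show (0:ℝ) < x + 1 by linarith) (show (0:ℝ) < 1 - σ by linarith) h0'
    (show (1 - σ) + σ = 1 by ring)
  rw [show (1-σ) * x + σ * (x+1) = x + σ by ring] at key
  refine key.trans (le_of_eq ?_)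
  rw [Real.Gamma_add_one (ne_of_gt hx),
    Real.mul_rpow (le_of_lt hx) (le_of_lt (Real.Gamma_pos_of_pos hx))]
  rw [show Real.Gamma x ^ (1 - σ) * (x ^ σ * Real.Gamma x ^ σ)
      = (Real.Gamma x ^ (1-σ) * Real.Gamma x ^ σ) * x ^ σ by ring,
    ← Real.rpow_add (Real.Gamma_pos_of_pos hx), show (1 - σ) + σ = 1 by ring,
    Real.rpow_one]

lemma gamma_wendel_lower {x σ : ℝ} (hx : 0 < x) (h0 : 0 ≤ σ) (h1 : σ ≤ 1) :
    Real.Gamma x * x ≤ Real.Gamma (x + σ) * (x + σ) ^ (1 - σ) := by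
  rcases eq_or_lt_of_le h0 with h | h0'
  · rw [← h, add_zero, sub_zero, Real.rpow_one]
  rcases eq_or_lt_of_le h1 with h | h1'
  · rw [h, Real.Gamma_add_one (ne_of_gt hx), sub_self, Real.rpow_zero, mul_one, mul_comm]
  have hxσ : (0:ℝ) < x + σ := by linarith
  have hGxσ : (0:ℝ) < Real.Gamma (x + σ) := Real.Gamma_pos_of_pos hxσ
  have key := Real.Gamma_mul_add_mul_le_rpow_Gamma_mul_rpow_Gamma hxσ
    (show (0:ℝ) < x + σ + 1 by linarith) h0' (show (0:ℝ) < 1 - σ by linarith)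
    (show σ + (1 - σ) = 1 by ring)
  rw [show σ * (x+σ) + (1-σ) * (x+σ+1) = x + 1 by ring,
    Real.Gamma_add_one (ne_of_gt hx), Real.Gamma_add_one (ne_of_gt hxσ)] at key
  calc Real.Gamma x * x = x * Real.Gamma x := mul_comm _ _
    _ ≤ Real.Gamma (x+σ) ^ σ * ((x+σ) * Real.Gamma (x+σ)) ^ (1-σ) := key
    _ = Real.Gamma (x+σ) * (x+σ) ^ (1-σ) := by
        rw [Real.mul_rpow (le_of_lt hxσ) (le_of_lt hGxσ),
          show Real.Gamma (x+σ) ^ σ * ((x+σ) ^ (1-σ) * Real.Gamma (x+σ) ^ (1-σ))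
            = (Real.Gamma (x+σ) ^ σ * Real.Gamma (x+σ) ^ (1-σ)) * (x+σ) ^ (1-σ) by ring,
          ← Real.rpow_add hGxσ, show σ + (1-σ) = 1 by ring, Real.rpow_one]

/-- `A l = Γ(λ+l+1)/(Γ(l+1) l^λ)` -/
noncomputable def mhA (lam : ℝ) (l : ℕ) : ℝ :=
  Real.Gamma (lam + l + 1) / (Real.Gamma ((l:ℝ) + 1) * (l:ℝ) ^ lam)

noncomputable def mhU (lam : ℝ) (l : ℕ) : ℝ :=
  (∏ i ∈ Finset.range ⌊lam⌋₊, (((l:ℝ) + 1 + (lam - ⌊lam⌋₊) + i) / l)) *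
    (((l:ℝ) + 1) / l) ^ (lam - ⌊lam⌋₊)

noncomputable def mhV (lam : ℝ) (l : ℕ) : ℝ :=
  (∏ i ∈ Finset.range ⌊lam⌋₊, (((l:ℝ) + 1 + (lam - ⌊lam⌋₊) + i) / l)) *
    (((l:ℝ) + 1) / l) * (((l:ℝ) + 1 + (lam - ⌊lam⌋₊)) / l) ^ ((lam - ⌊lam⌋₊) - 1)

lemma tendsto_shift_div (c : ℝ) :
    Tendsto (fun l : ℕ => ((l:ℝ) + c) / l) atTop (𝓝 1) := by
  have h1 : Tendsto (fun l : ℕ => 1 + c / l) atTop (𝓝 (1 + 0)) :=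
    tendsto_const_nhds.add (tendsto_const_div_atTop_nhds_zero_nat c)
  rw [add_zero] at h1
  apply h1.congr'
  filter_upwards [eventually_ge_atTop 1] with l hl
  have hl0 : ((l:ℝ)) ≠ 0 := by
    have : (1:ℝ) ≤ (l:ℝ) := by exact_mod_cast hl
    linarith
  field_simp

lemma mhU_tendsto (lam : ℝ) : Tendsto (mhU lam) atTop (𝓝 1) := by
  have h1 : Tendsto (fun l : ℕ => ∏ i ∈ Finset.range ⌊lam⌋₊,
      (((l:ℝ) + 1 + (lam - ⌊lam⌋₊) + i) / l)) atTop (𝓝 1) := by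
    have := tendsto_finset_prod (f := fun (i : ℕ) (l : ℕ) =>
        (((l:ℝ) + 1 + (lam - ⌊lam⌋₊) + i) / l)) (a := fun _ => (1:ℝ))
        (Finset.range ⌊lam⌋₊) (fun i _ => by
          have := tendsto_shift_div (1 + (lam - ⌊lam⌋₊) + i)
          apply this.congr
          intro l; ring_nf)
    simpa using this
  have h2 : Tendsto (fun l : ℕ => (((l:ℝ) + 1) / l) ^ (lam - ⌊lam⌋₊))
      atTop (𝓝 1) := by
    have := (tendsto_shift_div 1).rpow
      (tendsto_const_nhds (x := lam - ⌊lam⌋₊)) (Or.inl one_ne_zero)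
    simpa using this
  have := h1.mul h2
  rw [one_mul] at this
  exact this

lemma mhV_tendsto (lam : ℝ) : Tendsto (mhV lam) atTop (𝓝 1) := by
  have h1 : Tendsto (fun l : ℕ => ∏ i ∈ Finset.range ⌊lam⌋₊,
      (((l:ℝ) + 1 + (lam - ⌊lam⌋₊) + i) / l)) atTop (𝓝 1) := by
    have := tendsto_finset_prod (f := fun (i : ℕ) (l : ℕ) =>
        (((l:ℝ) + 1 + (lam - ⌊lam⌋₊) + i) / l)) (a := fun _ => (1:ℝ))
        (Finset.range ⌊lam⌋₊) (fun i _ => by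
          have := tendsto_shift_div (1 + (lam - ⌊lam⌋₊) + i)
          apply this.congr
          intro l; ring_nf)
    simpa using this
  have h2 : Tendsto (fun l : ℕ => (((l:ℝ) + 1 + (lam - ⌊lam⌋₊)) / l) ^ ((lam - ⌊lam⌋₊) - 1))
      atTop (𝓝 1) := by
    have hb : Tendsto (fun l : ℕ => ((l:ℝ) + 1 + (lam - ⌊lam⌋₊)) / l) atTop (𝓝 1) := by
      have := tendsto_shift_div (1 + (lam - ⌊lam⌋₊))
      apply this.congr
      intro l; ring_nf
    have := hb.rpow (tendsto_const_nhds (x := (lam - ⌊lam⌋₊) - 1)) (Or.inl one_ne_zero)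
    simpa using this
  have := (h1.mul (tendsto_shift_div 1)).mul h2
  rw [one_mul, one_mul] at this
  exact this

lemma mhA_decomp (lam : ℝ) (hlam : 0 ≤ lam) (l : ℕ) (hl : 1 ≤ l) :
    Real.Gamma (lam + l + 1)
      = (∏ i ∈ Finset.range ⌊lam⌋₊, ((l:ℝ) + 1 + (lam - ⌊lam⌋₊) + i)) *
          Real.Gamma ((l:ℝ) + 1 + (lam - ⌊lam⌋₊)) := by
  have hx : (0:ℝ) < (l:ℝ) + 1 + (lam - ⌊lam⌋₊) := by
    have h0 : (0:ℝ) ≤ (l:ℝ) := Nat.cast_nonneg _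
    have h1 : (⌊lam⌋₊ : ℝ) ≤ lam := Nat.floor_le hlam
    linarith
  have := Gamma_add_nat ((l:ℝ) + 1 + (lam - ⌊lam⌋₊)) hx ⌊lam⌋₊
  rw [show ((l:ℝ) + 1 + (lam - ⌊lam⌋₊)) + (⌊lam⌋₊ : ℝ) = lam + l + 1 by ring] at this
  exact this

lemma mhA_le_mhU (lam : ℝ) (hlam : 0 ≤ lam) (l : ℕ) (hl : 1 ≤ l) :
    mhA lam l ≤ mhU lam l := by
  have hl0 : (0:ℝ) < (l:ℝ) := by exact_mod_cast Nat.pos_of_ne_zero (by omega)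
  have hfl : (⌊lam⌋₊ : ℝ) ≤ lam := Nat.floor_le hlam
  have hσ0 : (0:ℝ) ≤ lam - ⌊lam⌋₊ := by linarith
  have hσ1 : lam - ⌊lam⌋₊ ≤ 1 := by
    have := Nat.lt_floor_add_one lam; linarith
  have hx : (0:ℝ) < (l:ℝ) + 1 := by linarith
  have hGx : (0:ℝ) < Real.Gamma ((l:ℝ) + 1) := Real.Gamma_pos_of_pos hx
  have hprod : (0:ℝ) ≤ ∏ i ∈ Finset.range ⌊lam⌋₊, ((l:ℝ) + 1 + (lam - ⌊lam⌋₊) + i) :=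
    Finset.prod_nonneg (fun i _ => by
      have : (0:ℝ) ≤ (i:ℝ) := Nat.cast_nonneg _
      linarith)
  have hwendel := gamma_wendel_upper hx hσ0 hσ1
  rw [mhA, mhA_decomp lam hlam l hl]
  have step1 : (∏ i ∈ Finset.range ⌊lam⌋₊, ((l:ℝ) + 1 + (lam - ⌊lam⌋₊) + i)) *
        Real.Gamma ((l:ℝ) + 1 + (lam - ⌊lam⌋₊)) / (Real.Gamma ((l:ℝ) + 1) * (l:ℝ) ^ lam)
      ≤ (∏ i ∈ Finset.range ⌊lam⌋₊, ((l:ℝ) + 1 + (lam - ⌊lam⌋₊) + i)) *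
        (Real.Gamma ((l:ℝ) + 1) * ((l:ℝ)+1) ^ (lam - ⌊lam⌋₊)) /
          (Real.Gamma ((l:ℝ) + 1) * (l:ℝ) ^ lam) := by
    gcongr
  refine step1.trans (le_of_eq ?_)
  have hlpow : ((l:ℝ)) ^ lam = (l:ℝ) ^ (⌊lam⌋₊:ℕ) * (l:ℝ) ^ (lam - ⌊lam⌋₊) := by
    rw [← Real.rpow_natCast ((l:ℝ)) ⌊lam⌋₊, ← Real.rpow_add hl0]
    congr 1
    ring
  rw [mhU, hlpow, Finset.prod_div_distrib, Finset.prod_const, Finset.card_range,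
    Real.div_rpow (le_of_lt hx) (le_of_lt hl0)]
  have h1 : ((l:ℝ)) ^ (⌊lam⌋₊ : ℕ) ≠ 0 := by positivity
  have h2 : ((l:ℝ)) ^ (lam - ⌊lam⌋₊) ≠ 0 := ne_of_gt (Real.rpow_pos_of_pos hl0 _)
  have h3 : Real.Gamma ((l:ℝ) + 1) ≠ 0 := ne_of_gt hGx
  field_simp

lemma mhV_le_mhA (lam : ℝ) (hlam : 0 ≤ lam) (l : ℕ) (hl : 1 ≤ l) :
    mhV lam l ≤ mhA lam l := by
  have hl0 : (0:ℝ) < (l:ℝ) := by exact_mod_cast Nat.pos_of_ne_zero (by omega)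
  have hfl : (⌊lam⌋₊ : ℝ) ≤ lam := Nat.floor_le hlam
  have hσ0 : (0:ℝ) ≤ lam - ⌊lam⌋₊ := by linarith
  have hσ1 : lam - ⌊lam⌋₊ ≤ 1 := by
    have := Nat.lt_floor_add_one lam; linarith
  have hx : (0:ℝ) < (l:ℝ) + 1 := by linarith
  have hxσ : (0:ℝ) < (l:ℝ) + 1 + (lam - ⌊lam⌋₊) := by linarith
  have hGx : (0:ℝ) < Real.Gamma ((l:ℝ) + 1) := Real.Gamma_pos_of_pos hx
  have hprod : (0:ℝ) ≤ ∏ i ∈ Finset.range ⌊lam⌋₊, ((l:ℝ) + 1 + (lam - ⌊lam⌋₊) + i) :=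
    Finset.prod_nonneg (fun i _ => by
      have : (0:ℝ) ≤ (i:ℝ) := Nat.cast_nonneg _
      linarith)
  have hwendel := gamma_wendel_lower hx hσ0 hσ1
  have hpow : (0:ℝ) < ((l:ℝ) + 1 + (lam - ⌊lam⌋₊)) ^ (1 - (lam - ⌊lam⌋₊)) :=
    Real.rpow_pos_of_pos hxσ _
  have hkey : Real.Gamma ((l:ℝ)+1) * ((l:ℝ)+1) *
        ((l:ℝ) + 1 + (lam - ⌊lam⌋₊)) ^ ((lam - ⌊lam⌋₊) - 1)
      ≤ Real.Gamma ((l:ℝ) + 1 + (lam - ⌊lam⌋₊)) := by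
    rw [show (lam - ⌊lam⌋₊) - 1 = -(1 - (lam - ⌊lam⌋₊)) by ring,
      Real.rpow_neg (le_of_lt hxσ), ← div_eq_mul_inv]
    exact (div_le_iff₀ hpow).2 hwendel
  rw [mhA, mhA_decomp lam hlam l hl]
  have step1 : (∏ i ∈ Finset.range ⌊lam⌋₊, ((l:ℝ) + 1 + (lam - ⌊lam⌋₊) + i)) *
        (Real.Gamma ((l:ℝ)+1) * ((l:ℝ)+1) *
          ((l:ℝ) + 1 + (lam - ⌊lam⌋₊)) ^ ((lam - ⌊lam⌋₊) - 1)) /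
          (Real.Gamma ((l:ℝ) + 1) * (l:ℝ) ^ lam)
      ≤ (∏ i ∈ Finset.range ⌊lam⌋₊, ((l:ℝ) + 1 + (lam - ⌊lam⌋₊) + i)) *
        Real.Gamma ((l:ℝ) + 1 + (lam - ⌊lam⌋₊)) / (Real.Gamma ((l:ℝ) + 1) * (l:ℝ) ^ lam) := by
    gcongr
  refine le_trans (le_of_eq ?_) step1
  have hlpow : ((l:ℝ)) ^ lam = (l:ℝ) ^ (⌊lam⌋₊:ℕ) * (l:ℝ) ^ (lam - ⌊lam⌋₊) := by
    rw [← Real.rpow_natCast ((l:ℝ)) ⌊lam⌋₊, ← Real.rpow_add hl0]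
    congr 1
    ring
  have h4 : ((l:ℝ)) ^ ((lam - ⌊lam⌋₊) - 1) = (l:ℝ) ^ (lam - ⌊lam⌋₊) / (l:ℝ) := by
    rw [Real.rpow_sub hl0, Real.rpow_one]
  rw [mhV, hlpow, Finset.prod_div_distrib, Finset.prod_const, Finset.card_range,
    Real.div_rpow (le_of_lt hxσ) (le_of_lt hl0), h4]
  have h1 : ((l:ℝ)) ^ (⌊lam⌋₊ : ℕ) ≠ 0 := by positivity
  have h2 : ((l:ℝ)) ^ (lam - ⌊lam⌋₊) ≠ 0 := ne_of_gt (Real.rpow_pos_of_pos hl0 _)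
  have h3 : Real.Gamma ((l:ℝ) + 1) ≠ 0 := ne_of_gt hGx
  have h5 : ((l:ℝ) + 1 + (lam - ⌊lam⌋₊)) ^ ((lam - ⌊lam⌋₊) - 1) ≠ 0 :=
    ne_of_gt (Real.rpow_pos_of_pos hxσ _)
  field_simp

lemma mhA_tendsto (lam : ℝ) (hlam : 0 ≤ lam) : Tendsto (mhA lam) atTop (𝓝 1) :=
  tendsto_of_tendsto_of_tendsto_of_le_of_le' (mhV_tendsto lam) (mhU_tendsto lam)
    (eventually_atTop.2 ⟨1, fun l hl => mhV_le_mhA lam hlam l hl⟩)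
    (eventually_atTop.2 ⟨1, fun l hl => mhA_le_mhU lam hlam l hl⟩)

lemma mhU_le (lam : ℝ) (hlam : 0 ≤ lam) (l : ℕ) (hl : 1 ≤ l) :
    mhU lam l ≤ (2 + lam) ^ lam := by
  have hl0 : (0:ℝ) < (l:ℝ) := by exact_mod_cast Nat.pos_of_ne_zero (by omega)
  have hl1 : (1:ℝ) ≤ (l:ℝ) := by exact_mod_cast hl
  have hfl : (⌊lam⌋₊ : ℝ) ≤ lam := Nat.floor_le hlam
  have hσ0 : (0:ℝ) ≤ lam - ⌊lam⌋₊ := by linarith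
  have h2lam : (0:ℝ) < 2 + lam := by linarith
  have hprod : (∏ i ∈ Finset.range ⌊lam⌋₊, (((l:ℝ) + 1 + (lam - ⌊lam⌋₊) + i) / l))
      ≤ (2 + lam) ^ (⌊lam⌋₊ : ℕ) := by
    calc (∏ i ∈ Finset.range ⌊lam⌋₊, (((l:ℝ) + 1 + (lam - ⌊lam⌋₊) + i) / l))
        ≤ ∏ _i ∈ Finset.range ⌊lam⌋₊, (2 + lam) := by
          apply Finset.prod_le_prod
          · intro i _
            positivity
          · intro i hi
            rw [Finset.mem_range] at hi
            rw [div_le_iff₀ hl0]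
            have hi' : (i:ℝ) + 1 ≤ (⌊lam⌋₊ : ℝ) := by exact_mod_cast hi
            nlinarith
      _ = (2 + lam) ^ (⌊lam⌋₊ : ℕ) := by rw [Finset.prod_const, Finset.card_range]
  have hpow : (((l:ℝ) + 1) / l) ^ (lam - ⌊lam⌋₊) ≤ (2 + lam) ^ (lam - ⌊lam⌋₊) := by
    apply Real.rpow_le_rpow (by positivity) _ hσ0
    rw [div_le_iff₀ hl0]
    nlinarith
  have := mul_le_mul hprod hpow (by positivity) (by positivity)
  refine le_trans this (le_of_eq ?_)
  rw [← Real.rpow_natCast (2+lam) ⌊lam⌋₊, ← Real.rpow_add h2lam]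
  congr 1
  ring

lemma mhA_nonneg (lam : ℝ) (hlam : 0 ≤ lam) (l : ℕ) : 0 ≤ mhA lam l := by
  have h1 : (0:ℝ) < Real.Gamma (lam + l + 1) :=
    Real.Gamma_pos_of_pos (by have : (0:ℝ) ≤ (l:ℝ) := Nat.cast_nonneg _; linarith)
  have h2 : (0:ℝ) < Real.Gamma ((l:ℝ) + 1) :=
    Real.Gamma_pos_of_pos (by have : (0:ℝ) ≤ (l:ℝ) := Nat.cast_nonneg _; linarith)
  have h3 : (0:ℝ) ≤ ((l:ℝ)) ^ lam := Real.rpow_nonneg (Nat.cast_nonneg _) _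
  rw [mhA]
  positivity

lemma tendsto_lsin (r : ℝ) (hr : 0 < r) :
    Tendsto (fun l : ℕ => (l:ℝ) * Real.sin (r / (2*l))) atTop (𝓝 (r/2)) := by
  have hd : HasDerivAt Real.sin 1 0 := by simpa using Real.hasDerivAt_sin 0
  have hslope := hasDerivAt_iff_tendsto_slope.1 hd
  have hu : Tendsto (fun l : ℕ => r / (2*(l:ℝ))) atTop (𝓝[≠] 0) := by
    rw [tendsto_nhdsWithin_iff]
    constructor
    · have := tendsto_const_div_atTop_nhds_zero_nat (r/2)
      apply this.congr
      intro l
      rw [div_div]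
    · filter_upwards [eventually_ge_atTop 1] with l hl
      have hl0 : (0:ℝ) < (l:ℝ) := by exact_mod_cast Nat.pos_of_ne_zero (by omega)
      have : 0 < r / (2*(l:ℝ)) := by positivity
      exact ne_of_gt this
  have hcomp := hslope.comp hu
  have hsin : Tendsto (fun l : ℕ => Real.sin (r / (2*l)) / (r / (2*l))) atTop (𝓝 1) := by
    apply hcomp.congr
    intro l
    simp [slope_def_field, Real.sin_zero]
  have := hsin.const_mul (r/2)
  rw [mul_one] at this
  apply this.congr'
  filter_upwards [eventually_ge_atTop 1] with l hl
  have hl0 : (0:ℝ) < (l:ℝ) := by exact_mod_cast Nat.pos_of_ne_zero (by omega)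
  field_simp

noncomputable def mhF (lam r : ℝ) (l k : ℕ) : ℝ :=
  if k ≤ l then
    (-1:ℝ)^k * Real.rpow (l:ℝ) (-lam) *
      (Real.Gamma (lam + l + 1) / Real.Gamma ((l:ℝ) + 2*lam + 1)) *
      (Real.Gamma ((l:ℝ) + 2*lam + 1 + k) /
        (k.factorial * (l-k).factorial * Real.Gamma (lam + 1 + k))) *
      ((1 - Real.cos (r / l)) / 2) ^ k
  else 0

lemma jacobi_repr (lam r : ℝ) (hlam : 0 ≤ lam) (l : ℕ) :
    Real.rpow (l:ℝ) (-lam) * jacobiUltra lam l (Real.cos (r / l))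
      = ∑' k : ℕ, mhF lam r l k := by
  rw [tsum_eq_sum (s := Finset.range (l+1)) (fun k hk => by
    rw [Finset.mem_range] at hk
    rw [mhF, if_neg (by omega)])]
  rw [jacobiUltra, gegen_eq_mhH lam hlam l (Real.cos (r/l)), mhH]
  rw [show Real.Gamma (2*lam+1) * Real.Gamma (lam + l + 1) /
        (Real.Gamma ((l:ℝ) + 2*lam + 1) * Real.Gamma (lam+1)) *
        (Real.Gamma (lam+1) / Real.Gamma (2*lam+1) *
          ∑ k ∈ Finset.range (l+1), mhC lam l k * ((1 - Real.cos (r/l))/2) ^ k)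
      = Real.Gamma (2*lam+1) * Real.Gamma (lam + l + 1) /
        (Real.Gamma ((l:ℝ) + 2*lam + 1) * Real.Gamma (lam+1)) *
        (Real.Gamma (lam+1) / Real.Gamma (2*lam+1)) *
          ∑ k ∈ Finset.range (l+1), mhC lam l k * ((1 - Real.cos (r/l))/2) ^ k by ring]
  rw [Finset.mul_sum, Finset.mul_sum]
  apply Finset.sum_congr rfl
  intro k hk
  rw [Finset.mem_range] at hk
  rw [mhF, if_pos (by omega), mhC]
  have hG1 : Real.Gamma (lam + 1) ≠ 0 := ne_of_gt (Real.Gamma_pos_of_pos (by linarith))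
  have hG2 : Real.Gamma (2*lam + 1) ≠ 0 := ne_of_gt (Real.Gamma_pos_of_pos (by linarith))
  field_simp

lemma cos_to_sin (r : ℝ) (l : ℕ) :
    (1 - Real.cos (r / l)) / 2 = Real.sin (r / (2*l)) ^ 2 := by
  rw [Real.sin_sq_eq_half_sub, show 2 * (r / (2*(l:ℝ))) = r / l from by ring]
  ring

lemma mhF_eq_prod (lam r : ℝ) (hlam : 0 ≤ lam) (k l : ℕ) (hk : k ≤ l) (hl : 1 ≤ l) :
    mhF lam r l k
      = (-1:ℝ)^k / (k.factorial * Real.Gamma (lam + 1 + k)) * mhA lam l *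
        ((∏ i ∈ Finset.range k, (((l:ℝ) - i) / l)) *
         (∏ i ∈ Finset.range k, (((l:ℝ) + 2*lam + 1 + i) / l))) *
        ((l:ℝ) * Real.sin (r / (2*l))) ^ (2*k) := by
  have hl0 : (0:ℝ) < (l:ℝ) := by exact_mod_cast Nat.pos_of_ne_zero (by omega)
  have hprodpos : (0:ℝ) < ∏ i ∈ Finset.range k, ((l:ℝ) - i) :=
    Finset.prod_pos (fun i hi => by
      rw [Finset.mem_range] at hi
      have : (i:ℝ) + 1 ≤ (l:ℝ) := by exact_mod_cast (by omega : i + 1 ≤ l)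
      linarith)
  have hlk : (((l-k).factorial : ℕ) : ℝ)
      = ((l.factorial : ℕ) : ℝ) / ∏ i ∈ Finset.range k, ((l:ℝ) - i) := by
    rw [factorial_ratio l k hk, mul_comm, mul_div_assoc, div_self (ne_of_gt hprodpos),
      mul_one]
  rw [mhF, if_pos hk, cos_to_sin, mhA, hlk]
  rw [show Real.rpow ((l:ℕ) : ℝ) (-lam) = ((l:ℝ)) ^ (-lam) from rfl,
    Real.rpow_neg (le_of_lt hl0), Real.Gamma_nat_eq_factorial l,
    Gamma_add_nat ((l:ℝ) + 2*lam + 1) (by linarith) k,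
    Finset.prod_div_distrib, Finset.prod_div_distrib, Finset.prod_const,
    Finset.card_range]
  have h1 : ((l:ℝ)) ^ k ≠ 0 := by positivity
  have h2 : ((l.factorial : ℕ) : ℝ) ≠ 0 := Nat.cast_ne_zero.2 (Nat.factorial_ne_zero _)
  have h3 : ((k.factorial : ℕ) : ℝ) ≠ 0 := Nat.cast_ne_zero.2 (Nat.factorial_ne_zero _)
  have h4 : Real.Gamma (lam + 1 + k) ≠ 0 :=
    ne_of_gt (Real.Gamma_pos_of_pos (by
      have : (0:ℝ) ≤ (k:ℝ) := Nat.cast_nonneg _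
      linarith))
  have h5 : Real.Gamma ((l:ℝ) + 2*lam + 1) ≠ 0 :=
    ne_of_gt (Real.Gamma_pos_of_pos (by linarith))
  have h6 : ((l:ℝ)) ^ lam ≠ 0 := ne_of_gt (Real.rpow_pos_of_pos hl0 _)
  field_simp
  ring

lemma mhF_tendsto (lam r : ℝ) (hlam : 0 ≤ lam) (hr : 0 < r) (k : ℕ) :
    Tendsto (fun l : ℕ => mhF lam r l k) atTop
      (𝓝 ((-1:ℝ)^k / (k.factorial * Real.Gamma (lam + 1 + k)) * (r/2)^(2*k))) := by
  have hB1 : Tendsto (fun l : ℕ => ∏ i ∈ Finset.range k, (((l:ℝ) - i)/l)) atTop (𝓝 1) := by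
    have := tendsto_finset_prod (f := fun (i : ℕ) (l : ℕ) => (((l:ℝ) - i)/l))
      (a := fun _ => (1:ℝ)) (Finset.range k) (fun i _ => by
        apply (tendsto_shift_div (-(i:ℝ))).congr
        intro l
        rw [← sub_eq_add_neg])
    simpa using this
  have hB2 : Tendsto (fun l : ℕ => ∏ i ∈ Finset.range k, (((l:ℝ) + 2*lam + 1 + i)/l))
      atTop (𝓝 1) := by
    have := tendsto_finset_prod (f := fun (i : ℕ) (l : ℕ) => (((l:ℝ) + 2*lam + 1 + i)/l))
      (a := fun _ => (1:ℝ)) (Finset.range k) (fun i _ => by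
        apply (tendsto_shift_div (2*lam + 1 + (i:ℝ))).congr
        intro l
        ring_nf)
    simpa using this
  have hS : Tendsto (fun l : ℕ => ((l:ℝ) * Real.sin (r / (2*l)))^(2*k)) atTop
      (𝓝 ((r/2)^(2*k))) := (tendsto_lsin r hr).pow (2*k)
  have hall := ((tendsto_const_nhds
      (x := (-1:ℝ)^k / (k.factorial * Real.Gamma (lam + 1 + k)))).mul
        (mhA_tendsto lam hlam)).mul (hB1.mul hB2) |>.mul hS
  simp only [mul_one, one_mul] at hall
  apply hall.congr'
  filter_upwards [eventually_ge_atTop (max 1 k)] with l hl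
  rw [mhF_eq_prod lam r hlam k l (le_trans (le_max_right 1 k) hl)
    (le_trans (le_max_left 1 k) hl)]

lemma mhF_bound (lam r : ℝ) (hlam : 0 ≤ lam) (hr : 0 < r) (l k : ℕ) (hl : 1 ≤ l) :
    |mhF lam r l k| ≤ (2+lam)^lam / Real.Gamma (lam+1) *
      (((2*lam+3) * (r/2)^2)^k / k.factorial) := by
  have hGl1 : (0:ℝ) < Real.Gamma (lam + 1) := Real.Gamma_pos_of_pos (by linarith)
  have hc2 : (0:ℝ) ≤ (2+lam)^lam := Real.rpow_nonneg (by linarith) _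
  by_cases hk : k ≤ l
  swap
  · rw [mhF, if_neg hk, abs_zero]
    positivity
  have hl0 : (0:ℝ) < (l:ℝ) := by exact_mod_cast Nat.pos_of_ne_zero (by omega)
  have hl1 : (1:ℝ) ≤ (l:ℝ) := by exact_mod_cast hl
  have hGk : (0:ℝ) < Real.Gamma (lam + 1 + k) :=
    Real.Gamma_pos_of_pos (by have : (0:ℝ) ≤ (k:ℝ) := Nat.cast_nonneg _; linarith)
  have hfk : (0:ℝ) < (k.factorial : ℝ) := by exact_mod_cast Nat.factorial_pos k
  have hGmono : Real.Gamma (lam + 1) ≤ Real.Gamma (lam + 1 + k) := by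
    rw [Gamma_add_nat (lam+1) (by linarith) k]
    have hprod1 : (1:ℝ) ≤ ∏ i ∈ Finset.range k, (lam + 1 + i) := by
      have h := Finset.prod_le_prod (s := Finset.range k) (f := fun _ => (1:ℝ))
        (g := fun i : ℕ => lam + 1 + i) (fun i _ => zero_le_one)
        (fun i _ => by
          show (1:ℝ) ≤ lam + 1 + (i:ℝ)
          have : (0:ℝ) ≤ (i:ℝ) := Nat.cast_nonneg _
          linarith)
      simpa using h
    nlinarith
  have hB1nn : (0:ℝ) ≤ ∏ i ∈ Finset.range k, (((l:ℝ) - i)/l) :=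
    Finset.prod_nonneg (fun i hi => by
      rw [Finset.mem_range] at hi
      have : (i:ℝ) + 1 ≤ (l:ℝ) := by exact_mod_cast (by omega : i + 1 ≤ l)
      apply div_nonneg (by linarith) (le_of_lt hl0))
  have hB2nn : (0:ℝ) ≤ ∏ i ∈ Finset.range k, (((l:ℝ) + 2*lam + 1 + i)/l) :=
    Finset.prod_nonneg (fun i _ => by
      have : (0:ℝ) ≤ (i:ℝ) := Nat.cast_nonneg _
      apply div_nonneg (by linarith) (le_of_lt hl0))
  have hB1 : (∏ i ∈ Finset.range k, (((l:ℝ) - i)/l)) ≤ 1 := by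
    apply Finset.prod_le_one
    · intro i hi
      rw [Finset.mem_range] at hi
      have : (i:ℝ) + 1 ≤ (l:ℝ) := by exact_mod_cast (by omega : i + 1 ≤ l)
      apply div_nonneg (by linarith) (le_of_lt hl0)
    · intro i hi
      rw [div_le_one hl0]
      have : (0:ℝ) ≤ (i:ℝ) := Nat.cast_nonneg _
      linarith
  have hB2 : (∏ i ∈ Finset.range k, (((l:ℝ) + 2*lam + 1 + i)/l)) ≤ (2*lam+3)^k := by
    calc (∏ i ∈ Finset.range k, (((l:ℝ) + 2*lam + 1 + i)/l))
        ≤ ∏ _i ∈ Finset.range k, (2*lam+3) := by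
          apply Finset.prod_le_prod
          · intro i _
            have : (0:ℝ) ≤ (i:ℝ) := Nat.cast_nonneg _
            apply div_nonneg (by linarith) (le_of_lt hl0)
          · intro i hi
            rw [Finset.mem_range] at hi
            rw [div_le_iff₀ hl0]
            have hik : (i:ℝ) ≤ (l:ℝ) := by
              have : i ≤ l := by omega
              exact_mod_cast this
            nlinarith
      _ = (2*lam+3)^k := by rw [Finset.prod_const, Finset.card_range]
  have hsin : |(l:ℝ) * Real.sin (r/(2*l))| ≤ r/2 := by
    rw [abs_mul, abs_of_nonneg (le_of_lt hl0)]
    calc (l:ℝ) * |Real.sin (r/(2*l))| ≤ (l:ℝ) * |r/(2*(l:ℝ))| :=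
          mul_le_mul_of_nonneg_left Real.abs_sin_le_abs (le_of_lt hl0)
      _ = (l:ℝ) * (r/(2*(l:ℝ))) := by rw [abs_of_pos (by positivity)]
      _ = r/2 := by field_simp
  have hSnn : (0:ℝ) ≤ ((l:ℝ) * Real.sin (r/(2*l)))^(2*k) := by
    rw [pow_mul]
    exact pow_nonneg (sq_nonneg _) k
  have hS : ((l:ℝ) * Real.sin (r/(2*l)))^(2*k) ≤ (r/2)^(2*k) := by
    rw [pow_mul, pow_mul]
    apply pow_le_pow_left₀ (sq_nonneg _) _ k
    calc ((l:ℝ) * Real.sin (r/(2*l)))^2 = |(l:ℝ) * Real.sin (r/(2*l))|^2 := (sq_abs _).symm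
      _ ≤ (r/2)^2 := by
          apply pow_le_pow_left₀ (abs_nonneg _) hsin
  have hA : mhA lam l ≤ (2+lam)^lam := (mhA_le_mhU lam hlam l hl).trans (mhU_le lam hlam l hl)
  have hAnn := mhA_nonneg lam hlam l
  rw [mhF_eq_prod lam r hlam k l hk hl, abs_mul, abs_mul, abs_mul, abs_div, abs_pow,
    abs_neg, abs_one, one_pow,
    abs_of_pos (mul_pos hfk hGk),
    abs_of_nonneg hAnn, abs_mul,
    abs_of_nonneg hB1nn, abs_of_nonneg hB2nn,
    abs_of_nonneg hSnn]
  have hc1 : (0:ℝ) ≤ 1 / ((k.factorial : ℝ) * Real.Gamma (lam+1+k)) :=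
    le_of_lt (by positivity)
  calc 1 / ((k.factorial : ℝ) * Real.Gamma (lam+1+k)) * mhA lam l *
        ((∏ i ∈ Finset.range k, (((l:ℝ) - i)/l)) *
         (∏ i ∈ Finset.range k, (((l:ℝ) + 2*lam + 1 + i)/l))) *
        ((l:ℝ) * Real.sin (r / (2*l))) ^ (2*k)
      ≤ 1 / ((k.factorial : ℝ) * Real.Gamma (lam+1)) * ((2+lam)^lam) *
        (1 * (2*lam+3)^k) * ((r/2)^(2*k)) := by
        have s1 : 1 / ((k.factorial : ℝ) * Real.Gamma (lam+1+k))
            ≤ 1 / ((k.factorial : ℝ) * Real.Gamma (lam+1)) := by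
          apply one_div_le_one_div_of_le (by positivity)
          exact mul_le_mul_of_nonneg_left hGmono (le_of_lt hfk)
        have s2 : 1 / ((k.factorial : ℝ) * Real.Gamma (lam+1+k)) * mhA lam l
            ≤ 1 / ((k.factorial : ℝ) * Real.Gamma (lam+1)) * ((2+lam)^lam) :=
          mul_le_mul s1 hA hAnn (le_of_lt (by positivity))
        have s3 : (∏ i ∈ Finset.range k, (((l:ℝ) - i)/l)) *
              (∏ i ∈ Finset.range k, (((l:ℝ) + 2*lam + 1 + i)/l))
            ≤ 1 * (2*lam+3)^k :=
          mul_le_mul hB1 hB2 hB2nn (by linarith)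
        have s4 := mul_le_mul s2 s3 (mul_nonneg hB1nn hB2nn)
          (mul_nonneg (le_of_lt (by positivity)) hc2)
        exact mul_le_mul s4 hS hSnn
          (mul_nonneg (mul_nonneg (le_of_lt (by positivity)) hc2)
            (by positivity))
    _ = (2+lam)^lam / Real.Gamma (lam+1) * (((2*lam+3) * (r/2)^2)^k / k.factorial) := by
        rw [mul_pow, pow_mul]
        field_simp

lemma target_eq (lam r : ℝ) (hr : 0 < r) :
    Real.rpow (r/2) (-lam) * besselJ lam r
      = ∑' k : ℕ, (-1:ℝ)^k / (k.factorial * Real.Gamma (lam + 1 + k)) * (r/2)^(2*k) := by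
  have h2 : (0:ℝ) < r/2 := by linarith
  rw [besselJ, ← tsum_mul_left]
  apply tsum_congr
  intro m
  rw [show Real.rpow (r/2) (-lam) *
        ((-1:ℝ)^m / (m.factorial * Real.Gamma (m + lam + 1)) * (r/2)^(2*m) *
          Real.rpow (r/2) lam)
      = ((-1:ℝ)^m / (m.factorial * Real.Gamma ((m:ℝ) + lam + 1)) * (r/2)^(2*m)) *
        (Real.rpow (r/2) (-lam) * Real.rpow (r/2) lam) by ring]
  rw [show Real.rpow (r/2) (-lam) = (r/2) ^ (-lam) from rfl,
    show Real.rpow (r/2) lam = (r/2) ^ lam from rfl,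
    ← Real.rpow_add h2, neg_add_cancel, Real.rpow_zero, mul_one,
    show (m:ℝ) + lam + 1 = lam + 1 + m by ring]

/-- Mehler–Heine type asymptotic: for fixed `r > 0` and `λ ≥ 0`,
`lim_{l→∞} l^{-λ} P_l^{(λ,λ)}(cos(r/l)) = (r/2)^{-λ} J_λ(r)`. -/
theorem mehler_heine (lam r : ℝ) (hlam : 0 ≤ lam) (hr : 0 < r) :
    Tendsto (fun l : ℕ => Real.rpow (l : ℝ) (-lam) * jacobiUltra lam l (Real.cos (r / l)))
      atTop (𝓝 (Real.rpow (r / 2) (-lam) * besselJ lam r)) := by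
  have key := tendsto_tsum_of_dominated_convergence
    (f := fun (l : ℕ) (k : ℕ) => mhF lam r l k)
    (g := fun k => (-1:ℝ)^k / (k.factorial * Real.Gamma (lam + 1 + k)) * (r/2)^(2*k))
    (bound := fun k => (2+lam)^lam / Real.Gamma (lam+1) *
      (((2*lam+3) * (r/2)^2)^k / k.factorial))
    ((Real.summable_pow_div_factorial _).mul_left _)
    (fun k => mhF_tendsto lam r hlam hr k)
    (by
      filter_upwards [eventually_ge_atTop 1] with l hl k
      rw [Real.norm_eq_abs]
      exact mhF_bound lam r hlam hr l k hl)
  have h1 : (fun l : ℕ => Real.rpow (l:ℝ) (-lam) * jacobiUltra lam l (Real.cos (r / l)))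
      = fun l => ∑' k, mhF lam r l k := funext (jacobi_repr lam r hlam)
  rw [h1, target_eq lam r hr]
  exact key
end
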